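/- Let m be a positive integer and let U_1, …, U_m be independent random variables, each uniformly distributed on [0, 1]. Then E[max( max_{i=1}^m U_i , 1 − min_{i=1}^m U_i )] = (2m + 1) / (2m + 2). -/

import Mathlib

open MeasureTheory ProbabilityTheory

/-!
Since `max u (1 - u) = 1/2 + |u - 1/2|`, the integrand is `1/2 + D` with
`D = max_i |U_i - 1/2|`. The events `|U_i - 1/2| < r` are independent of probability `2r`, so
`P(D < r) = (2r)^m` for `r ≤ 1/2`, and the layer-cake formula gives
`E D = ∫_0^{1/2} (1 - (2r)^m) dr = 1/2 - 1/(2(m+1))`.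
-/

theorem max_sup'_sub_inf'_eq {ι : Type*} {s : Finset ι} (hs : s.Nonempty) (f : ι → ℝ) (a : ℝ) :
    max (s.sup' hs f) (a - s.inf' hs f) = a / 2 + s.sup' hs fun i => |f i - a / 2| := by
  obtain ⟨i, hi, hsup⟩ := s.exists_mem_eq_sup' hs f
  obtain ⟨j, hj, hinf⟩ := s.exists_mem_eq_inf' hs f
  obtain ⟨k, hk, hdev⟩ := s.exists_mem_eq_sup' hs fun i => |f i - a / 2|
  have hki := s.le_sup' f hk
  have hkj := s.inf'_le f hk
  have hik := s.le_sup' (fun i => |f i - a / 2|) hi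
  have hjk := s.le_sup' (fun i => |f i - a / 2|) hj
  simp only [hsup, hinf, hdev] at *
  apply le_antisymm
  · exact max_le (by linarith [le_abs_self (f i - a / 2)]) (by linarith [neg_abs_le (f j - a / 2)])
  · rcases abs_cases (f k - a / 2) with ⟨h, -⟩ | ⟨h, -⟩
    · exact le_max_of_le_left (by linarith)
    · exact le_max_of_le_right (by linarith)

theorem integral_one_sub_two_mul_pow (n : ℕ) :
    ∫ s in (0 : ℝ)..1 / 2, (1 - (2 * s) ^ n) = 1 / 2 - 1 / (2 * (n + 1)) := by
  rw [intervalIntegral.integral_sub intervalIntegrable_const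
      ((by fun_prop : Continuous fun s : ℝ => (2 * s) ^ n).intervalIntegrable _ _),
    intervalIntegral.integral_comp_mul_left (fun s => s ^ n) two_ne_zero, integral_pow,
    intervalIntegral.integral_const]
  norm_num
  field_simp

theorem volume_restrict_Icc_ball_half {r : ℝ} (hr : r ≤ 1 / 2) :
    volume.restrict (Set.Icc (0 : ℝ) 1) (Metric.ball (1 / 2) r) = ENNReal.ofReal (2 * r) := by
  rw [Measure.restrict_apply measurableSet_ball, Set.inter_eq_left.mpr, Real.volume_ball]
  rw [Real.ball_eq_Ioo]
  exact Set.Ioo_subset_Icc_self.trans (Set.Icc_subset_Icc (by linarith) (by linarith))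

section UniformSample

variable {Ω ι : Type*} [Fintype ι] [Nonempty ι]

noncomputable def maxDistHalf (U : ι → Ω → ℝ) (ω : Ω) : ℝ :=
  Finset.univ.sup' Finset.univ_nonempty fun i => |U i ω - 1 / 2|

variable {U : ι → Ω → ℝ}

theorem maxDistHalf_nonneg (ω : Ω) : 0 ≤ maxDistHalf U ω :=
  (abs_nonneg _).trans
    (Finset.le_sup' (fun i => |U i ω - 1 / 2|) (Finset.mem_univ (Classical.arbitrary ι)))

variable [MeasurableSpace Ω] {μ : Measure Ω}

theorem measurable_maxDistHalf (hU : ∀ i, Measurable (U i)) : Measurable (maxDistHalf U) := by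
  unfold maxDistHalf
  fun_prop

theorem ae_maxDistHalf_le (hU : ∀ i, Measurable (U i))
    (hunif : ∀ i, μ.map (U i) = volume.restrict (Set.Icc (0 : ℝ) 1)) :
    ∀ᵐ ω ∂μ, maxDistHalf U ω ≤ 1 / 2 := by
  have hmem : ∀ i, ∀ᵐ ω ∂μ, U i ω ∈ Set.Icc (0 : ℝ) 1 := fun i =>
    ae_of_ae_map (hU i).aemeasurable (by rw [hunif i]; exact ae_restrict_mem measurableSet_Icc)
  filter_upwards [ae_all_iff.2 hmem] with ω hω
  exact Finset.sup'_le _ _ fun i _ => abs_le.2 ⟨by linarith [(hω i).1], by linarith [(hω i).2]⟩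

theorem integrable_maxDistHalf [IsFiniteMeasure μ] (hU : ∀ i, Measurable (U i))
    (hunif : ∀ i, μ.map (U i) = volume.restrict (Set.Icc (0 : ℝ) 1)) :
    Integrable (maxDistHalf U) μ := by
  refine .of_bound (measurable_maxDistHalf hU).aestronglyMeasurable (1 / 2) ?_
  filter_upwards [ae_maxDistHalf_le hU hunif] with ω hω
  rwa [Real.norm_of_nonneg (maxDistHalf_nonneg ω)]

theorem measure_maxDistHalf_lt (hU : ∀ i, Measurable (U i)) (hindep : iIndepFun U μ)
    (hunif : ∀ i, μ.map (U i) = volume.restrict (Set.Icc (0 : ℝ) 1)) {r : ℝ} (hr : r ≤ 1 / 2) :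
    μ {ω | maxDistHalf U ω < r} = ENNReal.ofReal (2 * r) ^ Fintype.card ι := by
  have hball : ∀ i, μ (U i ⁻¹' Metric.ball (1 / 2) r) = ENNReal.ofReal (2 * r) := fun i => by
    rw [← Measure.map_apply (hU i) measurableSet_ball, hunif i, volume_restrict_Icc_ball_half hr]
  have hset : {ω | maxDistHalf U ω < r} = ⋂ i, U i ⁻¹' Metric.ball (1 / 2) r := by
    ext ω
    simp [maxDistHalf, Finset.sup'_lt_iff, Real.dist_eq]
  rw [hset, hindep.meas_iInter fun i => ⟨_, measurableSet_ball, rfl⟩]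
  simp only [hball, Finset.prod_const, Finset.card_univ]

theorem measureReal_le_maxDistHalf [IsProbabilityMeasure μ] (hU : ∀ i, Measurable (U i))
    (hindep : iIndepFun U μ) (hunif : ∀ i, μ.map (U i) = volume.restrict (Set.Icc (0 : ℝ) 1))
    {r : ℝ} (hr₀ : 0 ≤ r) (hr : r ≤ 1 / 2) :
    μ.real {ω | r ≤ maxDistHalf U ω} = 1 - (2 * r) ^ Fintype.card ι := by
  simp only [← not_lt]
  rw [← Set.compl_ofPred,
    probReal_compl_eq_one_sub (measurableSet_lt (measurable_maxDistHalf hU) measurable_const),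
    measureReal_def, measure_maxDistHalf_lt hU hindep hunif hr]
  simp [ENNReal.toReal_pow, hr₀]

theorem integral_maxDistHalf [IsProbabilityMeasure μ] (hU : ∀ i, Measurable (U i))
    (hindep : iIndepFun U μ) (hunif : ∀ i, μ.map (U i) = volume.restrict (Set.Icc (0 : ℝ) 1)) :
    ∫ ω, maxDistHalf U ω ∂μ = 1 / 2 - 1 / (2 * (Fintype.card ι + 1)) := by
  rw [(integrable_maxDistHalf hU hunif).integral_eq_integral_Ioc_meas_le
      (.of_forall maxDistHalf_nonneg) (ae_maxDistHalf_le hU hunif),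
    setIntegral_congr_fun measurableSet_Ioc fun r hr =>
      measureReal_le_maxDistHalf hU hindep hunif hr.1.le hr.2,
    ← intervalIntegral.integral_of_le (by norm_num), integral_one_sub_two_mul_pow]

end UniformSample

/-- Lemma A.1: if `U 1, …, U m` are i.i.d. `Uniform[0,1]` random variables then
`E[max(max_i U i, 1 - min_i U i)] = (2m+1)/(2m+2)`. -/
theorem expectation_max_max_one_sub_min
    {Ω : Type*} [MeasurableSpace Ω] (μ : Measure Ω) [IsProbabilityMeasure μ]
    (m : ℕ) (hm : 0 < m)
    (U : Fin m → Ω → ℝ) (hUmeas : ∀ i, Measurable (U i))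
    (hindep : iIndepFun U μ)
    (hunif : ∀ i, μ.map (U i) = volume.restrict (Set.Icc (0 : ℝ) 1)) :
    ∫ ω, max
        ((Finset.univ.sup' (Finset.univ_nonempty_iff.mpr ⟨⟨0, hm⟩⟩)) (fun i => U i ω))
        (1 - (Finset.univ.inf' (Finset.univ_nonempty_iff.mpr ⟨⟨0, hm⟩⟩)) (fun i => U i ω))
      ∂μ = (2 * m + 1) / (2 * m + 2) := by
  have : Nonempty (Fin m) := ⟨⟨0, hm⟩⟩
  simp_rw [max_sup'_sub_inf'_eq]
  change ∫ ω, 1 / 2 + maxDistHalf U ω ∂μ = _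
  rw [integral_add (integrable_const _) (integrable_maxDistHalf hUmeas hunif),
    integral_maxDistHalf hUmeas hindep hunif, integral_const, probReal_univ, one_smul,
    Fintype.card_fin]
  field_simp
  ring
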